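/- If a and b are strongly normalizing expressions, the application a b has a key redex, and red_k(a b) is strongly normalizing, then a b is strongly normalizing. -/

import Mathlib

/-- Expressions of a pure type system: sorts, de Bruijn variables,
dependent products, annotated abstractions, applications. -/
inductive Expr : Type
  | sort : Nat → Expr
  | var : Nat → Expr
  | pi : Expr → Expr → Expr
  | lam : Expr → Expr → Expr
  | app : Expr → Expr → Expr
  deriving DecidableEq

/-- Lift free de Bruijn variables `≥ k` by `d`. -/
def Expr.lift (d k : Nat) : Expr → Expr
  | .sort s => .sort s
  | .var n => if n < k then .var n else .var (n + d)
  | .pi A B => .pi (Expr.lift d k A) (Expr.lift d (k+1) B)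
  | .lam A b => .lam (Expr.lift d k A) (Expr.lift d (k+1) b)
  | .app a b => .app (Expr.lift d k a) (Expr.lift d k b)

/-- Capture-avoiding substitution of `e` for variable `k`. -/
def Expr.subst (e : Expr) (k : Nat) : Expr → Expr
  | .sort s => .sort s
  | .var n => if n < k then .var n else if n = k then Expr.lift k 0 e else .var (n - 1)
  | .pi A B => .pi (Expr.subst e k A) (Expr.subst e (k+1) B)
  | .lam A b => .lam (Expr.subst e k A) (Expr.subst e (k+1) b)
  | .app a b => .app (Expr.subst e k a) (Expr.subst e k b)

/-- One-step beta reduction, with full congruence rules. -/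
inductive Step : Expr → Expr → Prop
  | beta (A b a : Expr) : Step (.app (.lam A b) a) (Expr.subst a 0 b)
  | pi1 {A A' B} : Step A A' → Step (.pi A B) (.pi A' B)
  | pi2 {A B B'} : Step B B' → Step (.pi A B) (.pi A B')
  | lam1 {A A' b} : Step A A' → Step (.lam A b) (.lam A' b)
  | lam2 {A b b'} : Step b b' → Step (.lam A b) (.lam A b')
  | app1 {a a' b} : Step a a' → Step (.app a b) (.app a' b)
  | app2 {a b b'} : Step b b' → Step (.app a b) (.app a b')

/-- Multi-step reduction. -/
def Steps : Expr → Expr → Prop := Relation.ReflTransGen Step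

/-- Strong normalization: no infinite reduction sequences from `a`. -/
def SN (a : Expr) : Prop := Acc (fun x y => Step y x) a

/-- Base expressions: a variable applied to a list of arguments. -/
inductive Base : Expr → Prop
  | var (n : Nat) : Base (.var n)
  | app {a} (b : Expr) : Base a → Base (.app a b)

/-- Key-redex contraction: `KeyRed a b` means `a` has a key redex and
contracting it yields `b` (i.e. `b = red_k a`). -/
inductive KeyRed : Expr → Expr → Prop
  | beta (A b a : Expr) : KeyRed (.app (.lam A b) a) (Expr.subst a 0 b)
  | app {a a'} (b : Expr) : KeyRed a a' → KeyRed (.app a b) (.app a' b)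

/-- `a` has a key redex. -/
def HasKey (a : Expr) : Prop := ∃ b, KeyRed a b

/-- Saturated sets of expressions. -/
def Saturated (S : Set Expr) : Prop :=
  (∀ a ∈ S, SN a) ∧
  (∀ a, Base a → SN a → a ∈ S) ∧
  (∀ a b, SN a → KeyRed a b → b ∈ S → a ∈ S)

/-- Function space on sets of expressions. -/
def Arrow (S₁ S₂ : Set Expr) : Set Expr := {a | ∀ b ∈ S₁, Expr.app a b ∈ S₂}

/-!
Every one-step reduct of `a b` is strongly normalizing, by induction on `SN a` and then on
`SN b`. Contracting the key redex gives `c`. A reduction inside `a` or `b` keeps a key redex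
whose contractum is a multi-step reduct of `c`, so the induction hypothesis applies: for a
step inside the body of the key β-redex because reduction is stable under substitution, and
for a step inside its argument because `t[x := e] →* t[x := e']` whenever `e → e'`. Both rest
on the commutation laws of de Bruijn lifting and substitution.
-/

namespace Expr

theorem lift_lift_of_le (j d : Nat) (t : Expr) : ∀ m k, m ≤ k →
    lift d (k + j) (lift j m t) = lift j m (lift d k t) := by
  induction t with intro m k h
  | sort => rfl
  | var n => grind [lift]
  | pi A B ihA ihB | lam A B ihA ihB =>
    simp only [lift, ihA m k h, Nat.add_right_comm k j 1, ihB (m + 1) (k + 1) (by omega)]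
  | app A B ihA ihB => simp only [lift, ihA m k h, ihB m k h]

theorem lift_lift_add (j p : Nat) (t : Expr) : ∀ m m', m' ≤ m → m ≤ m' + p →
    lift j m (lift p m' t) = lift (p + j) m' t := by
  induction t with intro m m' h₁ h₂
  | sort => rfl
  | var n => grind [lift]
  | pi A B ihA ihB | lam A B ihA ihB =>
    simp only [lift, ihA m m' h₁ h₂, ihB (m + 1) (m' + 1) (by omega) (by omega)]
  | app A B ihA ihB => simp only [lift, ihA m m' h₁ h₂, ihB m m' h₁ h₂]

theorem subst_lift_succ (x : Expr) (d : Nat) (t : Expr) : ∀ m j, m ≤ j → j ≤ m + d →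
    subst x j (lift (d + 1) m t) = lift d m t := by
  induction t with intro m j h₁ h₂
  | sort => rfl
  | var n => grind [lift, subst]
  | pi A B ihA ihB | lam A B ihA ihB =>
    simp only [lift, subst, ihA m j h₁ h₂, ihB (m + 1) (j + 1) (by omega) (by omega)]
  | app A B ihA ihB => simp only [lift, subst, ihA m j h₁ h₂, ihB m j h₁ h₂]

theorem lift_subst (d k : Nat) (a t : Expr) : ∀ j,
    lift d (k + j) (subst a j t) = subst (lift d k a) j (lift d (k + j + 1) t) := by
  induction t with intro j
  | sort => rfl
  | var n =>
    by_cases hn : n = j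
    · subst hn
      simp only [subst, lift, lt_irrefl, if_false, if_true, show n < k + n + 1 by omega]
      exact lift_lift_of_le n d a 0 k (Nat.zero_le _)
    · grind [lift, subst]
  | pi A B ihA ihB | lam A B ihA ihB =>
    simp only [lift, subst, ihA j]
    rw [show k + j + 1 = k + (j + 1) by omega, ihB (j + 1)]
  | app A B ihA ihB => simp only [lift, subst, ihA j, ihB j]

theorem subst_lift_of_le (e : Expr) (j : Nat) (t : Expr) : ∀ m k, m ≤ k →
    subst e (k + j) (lift j m t) = lift j m (subst e k t) := by
  induction t with intro m k h
  | sort => rfl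
  | var n =>
    by_cases hn : n = k
    · subst hn
      simp only [subst, lift, lt_irrefl, if_false, if_true, show ¬ n < m by omega]
      exact (lift_lift_add j n e m 0 (Nat.zero_le _) (by omega)).symm
    · grind [lift, subst]
  | pi A B ihA ihB | lam A B ihA ihB =>
    simp only [lift, subst, ihA m k h, Nat.add_right_comm k j 1, ihB (m + 1) (k + 1) (by omega)]
  | app A B ihA ihB => simp only [lift, subst, ihA m k h, ihB m k h]

theorem subst_subst (e a : Expr) (k : Nat) (t : Expr) : ∀ j,
    subst e (k + j) (subst a j t) = subst (subst e k a) j (subst e (k + j + 1) t) := by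
  induction t with intro j
  | sort => rfl
  | var n =>
    by_cases hj : n = j
    · subst hj
      simp only [subst, lt_irrefl, if_false, if_true, show n < k + n + 1 by omega]
      exact subst_lift_of_le e n a 0 k (Nat.zero_le _)
    by_cases hk : n = k + j + 1
    · subst hk
      simp only [subst, lt_irrefl, if_false, if_true, show ¬ k + j + 1 < j by omega,
        show k + j + 1 ≠ j by omega, show k + j + 1 - 1 = k + j by omega]
      exact (subst_lift_succ (subst e k a) (k + j) e 0 j (Nat.zero_le _) (by omega)).symm
    · grind [subst]
  | pi A B ihA ihB | lam A B ihA ihB =>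
    simp only [subst, ihA j]
    rw [show k + j + 1 = k + (j + 1) by omega, ihB (j + 1)]
  | app A B ihA ihB => simp only [subst, ihA j, ihB j]

end Expr

namespace Steps

variable {a a' b b' : Expr}

theorem pi (ha : Steps a a') (hb : Steps b b') : Steps (.pi a b) (.pi a' b') :=
  (ha.lift (Expr.pi · b) fun _ _ => Step.pi1).trans (hb.lift (Expr.pi a') fun _ _ => Step.pi2)

theorem lam (ha : Steps a a') (hb : Steps b b') : Steps (.lam a b) (.lam a' b') :=
  (ha.lift (Expr.lam · b) fun _ _ => Step.lam1).trans (hb.lift (Expr.lam a') fun _ _ => Step.lam2)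

theorem app (ha : Steps a a') (hb : Steps b b') : Steps (.app a b) (.app a' b') :=
  (ha.lift (Expr.app · b) fun _ _ => Step.app1).trans (hb.lift (Expr.app a') fun _ _ => Step.app2)

end Steps

namespace Step

theorem lift {t t' : Expr} (h : Step t t') (d k : Nat) : Step (t.lift d k) (t'.lift d k) := by
  induction h generalizing k with
  | beta A b a =>
    have h := Expr.lift_subst d k a b 0
    simp only [Nat.add_zero] at h
    rw [Expr.lift, Expr.lift, h]
    exact beta _ _ _
  | pi1 _ ih => exact pi1 (ih k)
  | pi2 _ ih => exact pi2 (ih (k + 1))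
  | lam1 _ ih => exact lam1 (ih k)
  | lam2 _ ih => exact lam2 (ih (k + 1))
  | app1 _ ih => exact app1 (ih k)
  | app2 _ ih => exact app2 (ih k)

theorem subst {t t' : Expr} (h : Step t t') (e : Expr) (k : Nat) :
    Step (Expr.subst e k t) (Expr.subst e k t') := by
  induction h generalizing k with
  | beta A b a =>
    have h := Expr.subst_subst e a k b 0
    simp only [Nat.add_zero] at h
    rw [Expr.subst, Expr.subst, h]
    exact beta _ _ _
  | pi1 _ ih => exact pi1 (ih k)
  | pi2 _ ih => exact pi2 (ih (k + 1))
  | lam1 _ ih => exact lam1 (ih k)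
  | lam2 _ ih => exact lam2 (ih (k + 1))
  | app1 _ ih => exact app1 (ih k)
  | app2 _ ih => exact app2 (ih k)

theorem steps_subst_arg {e e' : Expr} (h : Step e e') (t : Expr) (k : Nat) :
    Steps (Expr.subst e k t) (Expr.subst e' k t) := by
  induction t generalizing k with
  | sort => exact .refl
  | var n =>
    by_cases hn : n = k
    · subst hn
      simp only [Expr.subst, lt_irrefl, if_false, if_true]
      exact .single (h.lift n 0)
    · simp only [Expr.subst, hn, if_false]
      exact .refl
  | pi A B ihA ihB => exact .pi (ihA k) (ihB (k + 1))
  | lam A B ihA ihB => exact .lam (ihA k) (ihB (k + 1))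
  | app A B ihA ihB => exact .app (ihA k) (ihB k)

end Step

theorem KeyRed.step_eq_or_keyRed {a c a' : Expr} (hk : KeyRed a c) (hs : Step a a') :
    a' = c ∨ ∃ c', KeyRed a' c' ∧ Steps c c' := by
  induction hk generalizing a' with
  | beta A b x =>
    cases hs with
    | beta => exact .inl rfl
    | app1 h =>
      cases h with
      | lam1 => exact .inr ⟨_, .beta _ b x, .refl⟩
      | lam2 h => exact .inr ⟨_, .beta _ _ x, .single (h.subst x 0)⟩
    | app2 h => exact .inr ⟨_, .beta A b _, h.steps_subst_arg b 0⟩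
  | app b hk ih =>
    cases hs with
    | beta => nomatch hk
    | app1 h =>
      rcases ih h with rfl | ⟨c', hk', hs'⟩
      · exact .inl rfl
      · exact .inr ⟨_, .app b hk', hs'.app .refl⟩
    | app2 h => exact .inr ⟨_, .app _ hk, .single (.app2 h)⟩

theorem SN.steps {a a' : Expr} (ha : SN a) (h : Steps a a') : SN a' := by
  induction h with
  | refl => exact ha
  | tail _ hs ih => exact ih.inv hs

/-- If `a, b ∈ SN`, `a b` has a key redex and `red_k (a b) ∈ SN`, then `a b ∈ SN`. -/
theorem app_SN_of_key_redex {a b c : Expr}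
    (ha : SN a) (hb : SN b) (hk : KeyRed (.app a b) c) (hc : SN c) :
    SN (.app a b) := by
  induction ha generalizing b c with
  | intro a _ iha =>
    induction hb generalizing c with
    | intro b hb' ihb =>
      refine ⟨_, fun x hx => ?_⟩
      rcases hk.step_eq_or_keyRed hx with rfl | ⟨c', hk', hc'⟩
      · exact hc
      cases hx with
      | beta =>
        cases hk with
        | beta => exact hc
        | app _ h => nomatch h
      | app1 h => exact iha _ h ⟨b, hb'⟩ hk' (hc.steps hc')
      | app2 h => exact ihb _ h hk' (hc.steps hc')
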